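/- arXiv:1902.05712 — 2 statements merged into one kernel-verified Lean document; each statement's English description precedes it below -/
import Mathlib

section
/- Let σ : ℝ → ℝ be measurable with Z(σ) := {σ = 0} countable and nonempty, let x_n ∉ Z(σ), and let X^{(n)} be the Euler–Maruyama scheme X^{(n)}_t = x_n + ∫_0^t σ(X^{(n)}_{η_n(s)}) dW_s with grid η_n(s) = kT/n for s ∈ [kT/n, (k+1)T/n). Then X^{(n)} satisfies the non-sticky condition E[∫_0^T 𝟙_{Z(σ)}(X^{(n)}_s) ds] = 0. -/
open MeasureTheory ProbabilityTheory
open scoped ENNReal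

variable {Ω : Type*}

/-- `W` is a standard one-dimensional Brownian motion under `P`: it starts at `0`, is measurable,
has Gaussian increments `W_t - W_s ∼ N(0, t-s)`, and its increments after time `s` are
independent of the σ-algebra generated by the path up to time `s`. -/
structure IsStdBrownian [MeasurableSpace Ω] (W : ℝ → Ω → ℝ) (P : Measure Ω) : Prop where
  meas : ∀ t, Measurable (W t)
  start : ∀ ω, W 0 ω = 0
  cont : ∀ ω, Continuous fun t => W t ω
  incr_law : ∀ s t : ℝ, 0 ≤ s → s ≤ t →
    Measure.map (fun ω => W t ω - W s ω) P = gaussianReal 0 (Real.toNNReal (t - s))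
  incr_indep : ∀ s t : ℝ, 0 ≤ s → s ≤ t →
    Indep (MeasurableSpace.comap (fun ω => W t ω - W s ω) (borel ℝ))
      (⨆ u ∈ Set.Icc (0 : ℝ) s, MeasurableSpace.comap (W u) (borel ℝ)) P

/-- The Euler–Maruyama scheme at the grid points `t_k = kT/n`:
`X_{t_{k+1}} = X_{t_k} + σ(X_{t_k})(W_{t_{k+1}} - W_{t_k})`, started at `x`. -/
noncomputable def emStep (σ : ℝ → ℝ) (W : ℝ → Ω → ℝ) (T : ℝ) (n : ℕ) (x : ℝ) :
    ℕ → Ω → ℝ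
  | 0 => fun _ => x
  | k + 1 => fun ω => emStep σ W T n x k ω +
      σ (emStep σ W T n x k ω) * (W (((k : ℝ) + 1) * T / n) ω - W ((k : ℝ) * T / n) ω)

/-- The continuous-time Euler–Maruyama scheme:
`X^{(n)}_s = X^{(n)}_{η_n(s)} + σ(X^{(n)}_{η_n(s)})(W_s - W_{η_n(s)})`
where `η_n(s) = ⌊ns/T⌋ T/n`. -/
noncomputable def emProc (σ : ℝ → ℝ) (W : ℝ → Ω → ℝ) (T : ℝ) (n : ℕ) (x : ℝ)
    (s : ℝ) (ω : Ω) : ℝ :=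
  emStep σ W T n x ⌊(n : ℝ) * s / T⌋₊ ω +
    σ (emStep σ W T n x ⌊(n : ℝ) * s / T⌋₊ ω) *
      (W s ω - W ((⌊(n : ℝ) * s / T⌋₊ : ℝ) * T / n) ω)

/-- Auxiliary: if `f` a.s. avoids the zero set of `σ`, `g` is Gaussian and independent of `f`,
then `f + σ(f) g` a.s. avoids the zero set of `σ`. -/
lemma key_avoid [MeasurableSpace Ω] {P : Measure Ω} [IsProbabilityMeasure P]
    {σ : ℝ → ℝ} (hσ : Measurable σ) (hZcount : {x : ℝ | σ x = 0}.Countable)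
    {f g : Ω → ℝ} (hf : Measurable f) (hg : Measurable g) {v : NNReal}
    (hlaw : Measure.map g P = gaussianReal 0 v) (hind : IndepFun f g P)
    (hfa : ∀ᵐ ω ∂P, σ (f ω) ≠ 0) :
    ∀ᵐ ω ∂P, σ (f ω + σ (f ω) * g ω) ≠ 0 := by
  by_cases hv : v = 0
  · have hg0 : ∀ᵐ ω ∂P, g ω = 0 := by
      have h1 : ∀ᵐ x ∂(Measure.map g P), x = 0 := by
        rw [hlaw, hv, gaussianReal_zero_var]
        exact (ae_dirac_iff (by simp)).mpr rfl
      exact (ae_map_iff hg.aemeasurable (by simp)).mp h1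
    filter_upwards [hfa, hg0] with ω h1 h2
    simpa [h2] using h1
  · set Z : Set ℝ := {x : ℝ | σ x = 0} with hZ
    have hZmeas : MeasurableSet Z := hZcount.measurableSet
    set B : Set (ℝ × ℝ) := {p : ℝ × ℝ | p.1 + σ p.1 * p.2 ∈ Z} with hB
    have hBmeas : MeasurableSet B := by
      have : Measurable fun p : ℝ × ℝ => p.1 + σ p.1 * p.2 :=
        measurable_fst.add ((hσ.comp measurable_fst).mul measurable_snd)
      exact this hZmeas
    have hpair : Measure.map (fun ω => (f ω, g ω)) P
        = (Measure.map f P).prod (Measure.map g P) :=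
      (indepFun_iff_map_prod_eq_prod_map_map hf.aemeasurable hg.aemeasurable).mp hind
    rw [Filter.eventually_iff, ← Filter.eventually_iff, ae_iff]
    have hset : {ω | ¬ σ (f ω + σ (f ω) * g ω) ≠ 0} = (fun ω => (f ω, g ω)) ⁻¹' B := by
      ext ω; simp [hB, hZ]
    rw [hset, ← Measure.map_apply (hf.prodMk hg) hBmeas, hpair,
      Measure.prod_apply hBmeas]
    have hae : ∀ᵐ x ∂(Measure.map f P), σ x ≠ 0 := by
      refine (ae_map_iff hf.aemeasurable ?_).mpr hfa
      exact (hσ (measurableSet_singleton 0)).compl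
    have : ∀ᵐ x ∂(Measure.map f P), (Measure.map g P) (Prod.mk x ⁻¹' B) = 0 := by
      filter_upwards [hae] with x hx
      have hsec : Prod.mk x ⁻¹' B = (fun y : ℝ => x + σ x * y) ⁻¹' Z := rfl
      have hinj : Function.Injective fun y : ℝ => x + σ x * y := by
        intro a b hab
        simpa [hx] using hab
      have hcnt : (Prod.mk x ⁻¹' B).Countable := by
        rw [hsec]; exact hZcount.preimage hinj
      rw [hlaw]
      exact (gaussianReal_absolutelyContinuous 0 hv) (hcnt.measure_zero volume)
    calc ∫⁻ x, (Measure.map g P) (Prod.mk x ⁻¹' B) ∂(Measure.map f P)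
        = ∫⁻ _, 0 ∂(Measure.map f P) := lintegral_congr_ae this
      _ = 0 := lintegral_zero

lemma W_meas_fil [MeasurableSpace Ω] {W : ℝ → Ω → ℝ} {u t : ℝ} (hu : u ∈ Set.Icc (0:ℝ) t) :
    Measurable[⨆ v ∈ Set.Icc (0:ℝ) t, MeasurableSpace.comap (W v) (borel ℝ)] (W u) := by
  refine Measurable.of_comap_le ?_
  have h : MeasurableSpace.comap (W u) (borel ℝ)
      ≤ ⨆ v ∈ Set.Icc (0:ℝ) t, MeasurableSpace.comap (W v) (borel ℝ) :=
    le_iSup₂ (f := fun v (_ : v ∈ Set.Icc (0:ℝ) t) => MeasurableSpace.comap (W v) (borel ℝ)) u hu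
  rwa [show (Real.measurableSpace : MeasurableSpace ℝ) = borel ℝ from rfl]

lemma emStep_meas_fil [MeasurableSpace Ω] {σ : ℝ → ℝ} (hσ : Measurable σ)
    {W : ℝ → Ω → ℝ} {T : ℝ} (hT : 0 < T) {n : ℕ} (hn : 0 < n) (x : ℝ) :
    ∀ (k : ℕ) (t : ℝ), (k : ℝ) * T / n ≤ t →
      Measurable[⨆ v ∈ Set.Icc (0:ℝ) t, MeasurableSpace.comap (W v) (borel ℝ)]
        (emStep σ W T n x k)
  | 0, t, _ => measurable_const
  | (k+1), t, ht => by
    rw [show ((k+1 : ℕ) : ℝ) = (k : ℝ) + 1 by push_cast; ring] at ht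
    have hTn : 0 ≤ T / (n : ℝ) := le_of_lt (div_pos hT (by exact_mod_cast hn))
    have hk0 : 0 ≤ (k : ℝ) * T / n := by positivity
    have hk1 : (k : ℝ) * T / n ≤ ((k : ℝ) + 1) * T / n := by
      rw [mul_div_assoc, mul_div_assoc]
      nlinarith [hTn]
    have ht' : (k : ℝ) * T / n ≤ t := le_trans hk1 ht
    have ih := emStep_meas_fil (W := W) hσ hT hn x k t ht'
    have h1 := W_meas_fil (W := W) (u := ((k : ℝ) + 1) * T / n) (t := t)
      ⟨le_trans hk0 hk1, ht⟩
    have h2 := W_meas_fil (W := W) (u := (k : ℝ) * T / n) (t := t) ⟨hk0, ht'⟩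
    show Measurable[⨆ v ∈ Set.Icc (0:ℝ) t, MeasurableSpace.comap (W v) (borel ℝ)]
      fun ω => emStep σ W T n x k ω +
        σ (emStep σ W T n x k ω) * (W (((k : ℝ) + 1) * T / n) ω - W ((k : ℝ) * T / n) ω)
    exact ih.add (((hσ.comp ih).mul (h1.sub h2)))

/-- Independence of a past-measurable function from a Brownian increment. -/
lemma indepFun_of_fil [MeasurableSpace Ω] {P : Measure Ω}
    {W : ℝ → Ω → ℝ} (hW : IsStdBrownian W P) {f : Ω → ℝ} {s t : ℝ}
    (hs : 0 ≤ s) (hst : s ≤ t)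
    (hfm : Measurable[⨆ v ∈ Set.Icc (0:ℝ) s, MeasurableSpace.comap (W v) (borel ℝ)] f) :
    IndepFun f (fun ω => W t ω - W s ω) P := by
  have h := (Indep_iff _ _ P).mp (hW.incr_indep s t hs hst)
  rw [IndepFun_iff]
  intro t1 t2 h1 h2
  rw [Set.inter_comm]
  rw [show P t1 * P t2 = P t2 * P t1 from mul_comm _ _]
  exact h t2 t1 h2 (hfm.comap_le t1 h1)

lemma emStep_avoid [MeasurableSpace Ω] {P : Measure Ω} [IsProbabilityMeasure P]
    {W : ℝ → Ω → ℝ} (hW : IsStdBrownian W P)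
    {σ : ℝ → ℝ} (hσ : Measurable σ) (hZcount : {x : ℝ | σ x = 0}.Countable)
    {T : ℝ} (hT : 0 < T) {n : ℕ} (hn : 0 < n) {xn : ℝ} (hxn : σ xn ≠ 0) :
    ∀ k : ℕ, ∀ᵐ ω ∂P, σ (emStep σ W T n xn k ω) ≠ 0 := by
  have hXm : ∀ k, Measurable (emStep σ W T n xn k) := by
    intro k
    induction k with
    | zero => exact measurable_const
    | succ k ih =>
      exact ih.add ((hσ.comp ih).mul ((hW.meas _).sub (hW.meas _)))
  intro k
  induction k with
  | zero => exact Filter.Eventually.of_forall fun ω => hxn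
  | succ k ih =>
    have hTn : 0 ≤ T / (n : ℝ) := le_of_lt (div_pos hT (by exact_mod_cast hn))
    have hk0 : 0 ≤ (k : ℝ) * T / n := by positivity
    have hk1 : (k : ℝ) * T / n ≤ ((k : ℝ) + 1) * T / n := by
      rw [mul_div_assoc, mul_div_assoc]; nlinarith [hTn]
    have hfm := emStep_meas_fil (W := W) hσ hT hn xn k ((k : ℝ) * T / n) le_rfl
    have hind := indepFun_of_fil hW hk0 hk1 hfm
    have hlaw := hW.incr_law ((k : ℝ) * T / n) (((k : ℝ) + 1) * T / n) hk0 hk1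
    exact key_avoid hσ hZcount (hXm k) ((hW.meas _).sub (hW.meas _)) hlaw hind ih

lemma emProc_avoid [MeasurableSpace Ω] {P : Measure Ω} [IsProbabilityMeasure P]
    {W : ℝ → Ω → ℝ} (hW : IsStdBrownian W P)
    {σ : ℝ → ℝ} (hσ : Measurable σ) (hZcount : {x : ℝ | σ x = 0}.Countable)
    {T : ℝ} (hT : 0 < T) {n : ℕ} (hn : 0 < n) {xn : ℝ} (hxn : σ xn ≠ 0)
    {s : ℝ} (hs : 0 ≤ s) :
    ∀ᵐ ω ∂P, σ (emProc σ W T n xn s ω) ≠ 0 := by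
  set k : ℕ := ⌊(n : ℝ) * s / T⌋₊ with hk
  have hnpos : (0 : ℝ) < n := by exact_mod_cast hn
  have hk0 : 0 ≤ (k : ℝ) * T / n := by positivity
  have hks : (k : ℝ) * T / n ≤ s := by
    have h1 : (k : ℝ) ≤ (n : ℝ) * s / T := Nat.floor_le (by positivity)
    rw [div_le_iff₀ hnpos]
    calc (k : ℝ) * T ≤ ((n : ℝ) * s / T) * T := by nlinarith [hT]
      _ = s * n := by field_simp
  have hfm := emStep_meas_fil (W := W) hσ hT hn xn k ((k : ℝ) * T / n) le_rfl
  have hind := indepFun_of_fil hW hk0 hks hfm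
  have hlaw := hW.incr_law ((k : ℝ) * T / n) s hk0 hks
  have hXm : ∀ j, Measurable (emStep σ W T n xn j) := by
    intro j
    induction j with
    | zero => exact measurable_const
    | succ j ih => exact ih.add ((hσ.comp ih).mul ((hW.meas _).sub (hW.meas _)))
  have ih := emStep_avoid hW hσ hZcount hT hn hxn k
  exact key_avoid hσ hZcount (hXm k) ((hW.meas _).sub (hW.meas _)) hlaw hind ih

/-- The Euler–Maruyama scheme started outside the countable zero set `Z(σ)` satisfies the
non-sticky condition `E[∫_0^T 𝟙_{Z(σ)}(X^{(n)}_s) ds] = 0`. -/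
theorem stmt_5 [MeasurableSpace Ω] (P : Measure Ω) [IsProbabilityMeasure P]
    (W : ℝ → Ω → ℝ) (hW : IsStdBrownian W P)
    (σ : ℝ → ℝ) (hσ : Measurable σ)
    (hZne : {x : ℝ | σ x = 0}.Nonempty) (hZcount : {x : ℝ | σ x = 0}.Countable)
    (T : ℝ) (hT : 0 < T) (n : ℕ) (hn : 0 < n) (xn : ℝ) (hxn : σ xn ≠ 0) :
    ∫⁻ ω, (∫⁻ s in Set.Ioc (0 : ℝ) T,
      Set.indicator {x : ℝ | σ x = 0} (fun _ => (1 : ℝ≥0∞)) (emProc σ W T n xn s ω)) ∂P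
      = 0 := by
  have hZmeas : MeasurableSet {x : ℝ | σ x = 0} := hZcount.measurableSet
  have hXm : ∀ j, Measurable (emStep σ W T n xn j) := by
    intro j
    induction j with
    | zero => exact measurable_const
    | succ j ih => exact ih.add ((hσ.comp ih).mul ((hW.meas _).sub (hW.meas _)))
  -- joint measurability of the EM process
  have hWj : Measurable (Function.uncurry W) :=
    measurable_uncurry_of_continuous_of_measurable hW.cont hW.meas
  have hfloor : Measurable fun p : ℝ × Ω => ⌊(n : ℝ) * p.1 / T⌋₊ :=
    ((measurable_fst.const_mul ((n : ℝ))).div_const T).nat_floor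
  have hA : Measurable fun p : ℝ × Ω => emStep σ W T n xn ⌊(n : ℝ) * p.1 / T⌋₊ p.2 := by
    have h1 : Measurable fun q : Ω × ℕ => emStep σ W T n xn q.2 q.1 :=
      measurable_from_prod_countable_left fun j => hXm j
    exact h1.comp (measurable_snd.prodMk hfloor)
  have hC : Measurable fun p : ℝ × Ω => W p.1 p.2 := hWj
  have hg : Measurable fun j : ℕ => ((j : ℝ) * T / n : ℝ) := measurable_from_top
  have hD : Measurable fun p : ℝ × Ω => W ((⌊(n : ℝ) * p.1 / T⌋₊ : ℝ) * T / n) p.2 :=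
    hWj.comp ((hg.comp hfloor).prodMk measurable_snd)
  have hF : Measurable fun p : ℝ × Ω => emProc σ W T n xn p.1 p.2 :=
    hA.add ((hσ.comp hA).mul (hC.sub hD))
  have hG : Measurable fun p : ℝ × Ω =>
      Set.indicator {x : ℝ | σ x = 0} (fun _ => (1 : ℝ≥0∞)) (emProc σ W T n xn p.1 p.2) :=
    (measurable_const.indicator hZmeas).comp hF
  have hswap := lintegral_lintegral_swap (μ := P) (ν := volume.restrict (Set.Ioc (0:ℝ) T))
    (f := fun ω s => Set.indicator {x : ℝ | σ x = 0} (fun _ => (1 : ℝ≥0∞))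
      (emProc σ W T n xn s ω)) ((hG.comp measurable_swap).aemeasurable)
  rw [hswap]
  have hzero : ∀ s ∈ Set.Ioc (0:ℝ) T,
      (∫⁻ ω, Set.indicator {x : ℝ | σ x = 0} (fun _ => (1 : ℝ≥0∞))
        (emProc σ W T n xn s ω) ∂P) = 0 := by
    intro s hs
    have hae := emProc_avoid hW hσ hZcount hT hn hxn (le_of_lt hs.1)
    calc ∫⁻ ω, Set.indicator {x : ℝ | σ x = 0} (fun _ => (1 : ℝ≥0∞))
          (emProc σ W T n xn s ω) ∂P
        = ∫⁻ _, 0 ∂P := by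
          refine lintegral_congr_ae (hae.mono fun ω hω => ?_)
          exact Set.indicator_of_notMem (s := {x : ℝ | σ x = 0})
            (a := emProc σ W T n xn s ω) hω _
      _ = 0 := lintegral_zero
  calc ∫⁻ s in Set.Ioc (0:ℝ) T, (∫⁻ ω, Set.indicator {x : ℝ | σ x = 0}
        (fun _ => (1 : ℝ≥0∞)) (emProc σ W T n xn s ω) ∂P)
      = ∫⁻ _ in Set.Ioc (0:ℝ) T, 0 := by
        refine setLIntegral_congr_fun measurableSet_Ioc ?_
        exact hzero
    _ = 0 := lintegral_zero
end

section
/- Let X be a solution of dX_t = σ(X_t) dW_t satisfying the non-sticky condition E[∫_0^T 𝟙_{Z(σ)}(X_s) ds] = 0, with sup_y E[L^y_T(X)] ≤ C_0 < ∞. Let z ∈ Z(σ) and f_z : ℝ → [0,1] be Lipschitz with support contained in [z − ε, z + ε]. Then E[∫_0^T f_z(X_s) ds] ≤ C_0 ∫_{-ε}^{ε} σ(z + y)^{-2} dy. -/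
open MeasureTheory
open scoped ENNReal

variable {Ω : Type*}

/-- `X` is a (weak) solution of `dX_t = σ(X_t) dW_t`, `X_0 = x₀`, formulated as a martingale
problem: `X` is a continuous martingale starting at `x₀` whose quadratic variation is
`⟨X⟩_t = ∫_0^t σ(X_s)² ds`, i.e. `X_t² - ∫_0^t σ(X_s)² ds` is a martingale. -/
structure IsSDESolution [m : MeasurableSpace Ω] (P : Measure Ω) (ℱ : Filtration ℝ m)
    (σ : ℝ → ℝ) (x₀ : ℝ) (X : ℝ → Ω → ℝ) : Prop where
  init : ∀ ω, X 0 ω = x₀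
  cont : ∀ ω, Continuous fun t => X t ω
  mart : Martingale X ℱ P
  qv : Martingale (fun t ω => (X t ω) ^ 2 - ∫ s in (0 : ℝ)..t, (σ (X s ω)) ^ 2) ℱ P


/-- Key estimate: if `X` solves `dX_t = σ(X_t) dW_t` with the non-sticky condition
`E[∫_0^T 𝟙_{Z(σ)}(X_s) ds] = 0`, `L^y` is the occupation density (local time at time `T`)
of `X` with `sup_y E[L^y_T(X)] ≤ C₀`, and `f_z : ℝ → [0,1]` is Lipschitz with support in
`[z-ε, z+ε]` for a zero `z` of `σ`, then
`E[∫_0^T f_z(X_s) ds] ≤ C₀ ∫_{-ε}^{ε} σ(z+y)^{-2} dy`. -/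
theorem stmt_9 [m : MeasurableSpace Ω] (P : Measure Ω) [IsProbabilityMeasure P]
    (ℱ : Filtration ℝ m) (σ : ℝ → ℝ) (hσmeas : Measurable σ)
    (x₀ : ℝ) (T : ℝ) (hT : 0 < T) (X : ℝ → Ω → ℝ)
    (hX : IsSDESolution P ℱ σ x₀ X)
    (hNonSticky : ∫⁻ ω, (∫⁻ s in Set.Ioc (0 : ℝ) T,
      Set.indicator {x : ℝ | σ x = 0} (fun _ => (1 : ℝ≥0∞)) (X s ω)) ∂P = 0)
    (L : ℝ → Ω → ℝ) (hLnn : ∀ y ω, 0 ≤ L y ω)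
    (hLmeas : Measurable (Function.uncurry L))
    (hOcc : ∀ g : ℝ → ℝ≥0∞, Measurable g → ∀ᵐ ω ∂P,
      ∫⁻ s in Set.Ioc (0 : ℝ) T, g (X s ω) * ENNReal.ofReal ((σ (X s ω)) ^ 2)
        = ∫⁻ y, g y * ENNReal.ofReal (L y ω))
    (C₀ : ℝ) (hC₀ : ∀ y : ℝ, ∫⁻ ω, ENNReal.ofReal (L y ω) ∂P ≤ ENNReal.ofReal C₀)
    (z : ℝ) (hz : σ z = 0) (ε : ℝ) (hε : 0 < ε)
    (f : ℝ → ℝ) (Kf : NNReal) (hfLip : LipschitzWith Kf f)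
    (hf01 : ∀ x, f x ∈ Set.Icc (0 : ℝ) 1)
    (hfsupp : Function.support f ⊆ Set.Icc (z - ε) (z + ε)) :
    ∫⁻ ω, ENNReal.ofReal (∫ s in (0 : ℝ)..T, f (X s ω)) ∂P
      ≤ ENNReal.ofReal C₀ *
        ∫⁻ y in Set.Ioo (-ε) ε, (ENNReal.ofReal ((σ (z + y)) ^ 2))⁻¹ := by
  have hXcont : ∀ ω, Continuous fun t => X t ω := hX.cont
  have hXmeas : Measurable (Function.uncurry X) := by
    refine measurable_uncurry_of_continuous_of_measurable hXcont fun t => ?_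
    exact ((hX.mart.stronglyAdapted t).measurable).mono (ℱ.le t) le_rfl
  set g : ℝ → ℝ≥0∞ := fun y => ENNReal.ofReal (f y) * (ENNReal.ofReal ((σ y) ^ 2))⁻¹ with hg_def
  have hg : Measurable g :=
    (ENNReal.measurable_ofReal.comp hfLip.continuous.measurable).mul
      ((ENNReal.measurable_ofReal.comp (hσmeas.pow_const 2)).inv)
  have hS : MeasurableSet {x : ℝ | σ x = 0} := hσmeas (measurableSet_singleton 0)
  -- non-sticky: for a.e. ω, σ (X s ω) ≠ 0 for a.e. s ∈ Ioc 0 T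
  have hNmeas : Measurable fun ω => ∫⁻ s in Set.Ioc (0 : ℝ) T,
      Set.indicator {x : ℝ | σ x = 0} (fun _ => (1 : ℝ≥0∞)) (X s ω) := by
    apply Measurable.lintegral_prod_right (f := fun ω s =>
      Set.indicator {x : ℝ | σ x = 0} (fun _ => (1 : ℝ≥0∞)) (X s ω))
    exact (measurable_one.indicator hS).comp (hXmeas.comp measurable_swap)
  have hNS : ∀ᵐ ω ∂P, ∀ᵐ s ∂(volume.restrict (Set.Ioc (0 : ℝ) T)), σ (X s ω) ≠ 0 := by
    have h0 := (lintegral_eq_zero_iff hNmeas).mp hNonSticky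
    filter_upwards [h0] with ω hω
    have hmeasω : Measurable fun s =>
        Set.indicator {x : ℝ | σ x = 0} (fun _ => (1 : ℝ≥0∞)) (X s ω) :=
      (measurable_one.indicator hS).comp (hXcont ω).measurable
    have := (lintegral_eq_zero_iff hmeasω).mp hω
    filter_upwards [this] with s hs
    intro hcon
    simp [Set.indicator_of_mem, hcon] at hs
  -- pointwise a.e. rewrite of the time integral
  have key : ∀ᵐ ω ∂P, ENNReal.ofReal (∫ s in (0 : ℝ)..T, f (X s ω))
      = ∫⁻ y, g y * ENNReal.ofReal (L y ω) := by
    filter_upwards [hNS, hOcc g hg] with ω hω hocc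
    have hcont' : Continuous fun s => f (X s ω) := hfLip.continuous.comp (hXcont ω)
    have hint : IntegrableOn (fun s => f (X s ω)) (Set.Ioc 0 T) := hcont'.integrableOn_Ioc
    rw [intervalIntegral.integral_of_le hT.le,
      ofReal_integral_eq_lintegral_ofReal hint
        (Filter.Eventually.of_forall fun s => (hf01 (X s ω)).1)]
    rw [← hocc]
    refine lintegral_congr_ae ?_
    filter_upwards [hω] with s hs
    have h1 : ENNReal.ofReal ((σ (X s ω)) ^ 2) ≠ 0 := by
      simp only [ne_eq, ENNReal.ofReal_eq_zero, not_le]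
      positivity
    have h2 : ENNReal.ofReal ((σ (X s ω)) ^ 2) ≠ ⊤ := ENNReal.ofReal_ne_top
    simp only [hg_def]
    rw [mul_assoc, ENNReal.inv_mul_cancel h1 h2, mul_one]
  calc ∫⁻ ω, ENNReal.ofReal (∫ s in (0 : ℝ)..T, f (X s ω)) ∂P
      = ∫⁻ ω, (∫⁻ y, g y * ENNReal.ofReal (L y ω)) ∂P := lintegral_congr_ae key
    _ = ∫⁻ (y : ℝ), ∫⁻ ω, g y * ENNReal.ofReal (L y ω) ∂P := by
        refine lintegral_lintegral_swap ?_
        exact ((hg.comp measurable_snd).mul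
          (ENNReal.measurable_ofReal.comp
            (hLmeas.comp measurable_swap))).aemeasurable
    _ = ∫⁻ (y : ℝ), g y * ∫⁻ ω, ENNReal.ofReal (L y ω) ∂P := by
        refine lintegral_congr fun y => ?_
        exact lintegral_const_mul (g y)
          (ENNReal.measurable_ofReal.comp (hLmeas.comp measurable_prodMk_left))
    _ ≤ ∫⁻ y, g y * ENNReal.ofReal C₀ := lintegral_mono fun y => mul_le_mul_right (hC₀ y) _
    _ = ENNReal.ofReal C₀ * ∫⁻ y, g y := by
        simp_rw [mul_comm (g _) _]
        exact lintegral_const_mul _ hg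
    _ ≤ ENNReal.ofReal C₀ * ∫⁻ y in Set.Ioo (-ε) ε, (ENNReal.ofReal ((σ (z + y)) ^ 2))⁻¹ := by
        refine mul_le_mul_right ?_ _
        have hbound : ∀ y, g y ≤ Set.indicator (Set.Icc (z - ε) (z + ε))
            (fun y => (ENNReal.ofReal ((σ y) ^ 2))⁻¹) y := by
          intro y
          by_cases hy : f y = 0
          · simp [hg_def, hy]
          · have hmem : y ∈ Set.Icc (z - ε) (z + ε) := hfsupp hy
            rw [Set.indicator_of_mem hmem]
            calc g y ≤ 1 * (ENNReal.ofReal ((σ y) ^ 2))⁻¹ :=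
                  mul_le_mul_left (ENNReal.ofReal_le_one.mpr (hf01 y).2) _
              _ = _ := one_mul _
        calc ∫⁻ y, g y
            ≤ ∫⁻ y, Set.indicator (Set.Icc (z - ε) (z + ε))
                (fun y => (ENNReal.ofReal ((σ y) ^ 2))⁻¹) y := lintegral_mono hbound
          _ = ∫⁻ y in Set.Icc (z - ε) (z + ε), (ENNReal.ofReal ((σ y) ^ 2))⁻¹ :=
              lintegral_indicator measurableSet_Icc _
          _ = ∫⁻ y in Set.Ioo (z - ε) (z + ε), (ENNReal.ofReal ((σ y) ^ 2))⁻¹ := by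
              rw [Measure.restrict_congr_set Ioo_ae_eq_Icc]
          _ = ∫⁻ y in Set.Ioo (-ε) ε, (ENNReal.ofReal ((σ (z + y)) ^ 2))⁻¹ := by
              rw [(measurePreserving_add_left volume z).setLIntegral_comp_emb
                (MeasurableEquiv.addLeft z).measurableEmbedding
                (fun x => (ENNReal.ofReal ((σ x) ^ 2))⁻¹) (Set.Ioo (-ε) ε)]
              rw [Set.image_const_add_Ioo]
              ring_nf
end
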